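/- arXiv:2107.01193 — 2 statements merged into one kernel-verified Lean document; each statement's English description precedes it below -/
import Mathlib

section
/- Let 𝔤 ⊆ 𝔤𝔩ₙ(ℝ) be a Lie subalgebra and R : Λ²ℝⁿ → 𝔤 a linear map. Define a bracket on ℝⁿ ⊕ 𝔤 by [(u,α),(v,β)] = (α·v − β·u, [α,β] − R(u,v)). This bracket is bilinear and antisymmetric, and it satisfies the Jacobi identity if and only if for all u,v,w ∈ ℝⁿ and all α ∈ 𝔤: (i) R(u,v)·w + R(v,w)·u + R(w,u)·v = 0, and (ii) R(α·u, v) + R(u, α·v) = [α, R(u,v)]. -/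
open Matrix

attribute [local instance 100] LieRing.ofAssociativeRing

/-- The bracket on `ℝⁿ ⊕ 𝔤` given by `[(u,α),(v,β)] = (α·v − β·u, [α,β] − R(u,v))`. -/
def classifyingBracket {n : ℕ} (𝔤 : LieSubalgebra ℝ (Matrix (Fin n) (Fin n) ℝ))
    (R : (Fin n → ℝ) →ₗ[ℝ] (Fin n → ℝ) →ₗ[ℝ] 𝔤)
    (a b : (Fin n → ℝ) × 𝔤) : (Fin n → ℝ) × 𝔤 :=
  ((a.2 : Matrix (Fin n) (Fin n) ℝ) *ᵥ b.1 - (b.2 : Matrix (Fin n) (Fin n) ℝ) *ᵥ a.1,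
    ⁅a.2, b.2⁆ - R a.1 b.1)

section Aux
variable {n : ℕ} {𝔤 : LieSubalgebra ℝ (Matrix (Fin n) (Fin n) ℝ)}

lemma gcoe_add (x y : 𝔤) : ((x + y : 𝔤) : Matrix (Fin n) (Fin n) ℝ) = x + y := rfl
lemma gcoe_sub (x y : 𝔤) : ((x - y : 𝔤) : Matrix (Fin n) (Fin n) ℝ) = x - y := rfl
lemma gcoe_neg (x : 𝔤) :
    ((-x : 𝔤) : Matrix (Fin n) (Fin n) ℝ) = -(x : Matrix (Fin n) (Fin n) ℝ) := rfl
lemma gcoe_smul (r : ℝ) (x : 𝔤) :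
    ((r • x : 𝔤) : Matrix (Fin n) (Fin n) ℝ) = r • (x : Matrix (Fin n) (Fin n) ℝ) := rfl
lemma gcoe_zero : (((0 : 𝔤)) : Matrix (Fin n) (Fin n) ℝ) = 0 := rfl

end Aux

/-- The bracket `[(u,α),(v,β)] = (α·v − β·u, [α,β] − R(u,v))` on `ℝⁿ ⊕ 𝔤` is bilinear and
antisymmetric, and it satisfies the Jacobi identity iff the first Bianchi identity and
the `𝔤`-equivariance of `R` hold. -/
theorem stmt0 {n : ℕ} (𝔤 : LieSubalgebra ℝ (Matrix (Fin n) (Fin n) ℝ))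
    (R : (Fin n → ℝ) →ₗ[ℝ] (Fin n → ℝ) →ₗ[ℝ] 𝔤)
    (hR : ∀ u v, R u v = - R v u) :
    (∀ (r s : ℝ) (a a' b : (Fin n → ℝ) × 𝔤),
      classifyingBracket 𝔤 R (r • a + s • a') b
        = r • classifyingBracket 𝔤 R a b + s • classifyingBracket 𝔤 R a' b) ∧
    (∀ (r s : ℝ) (a b b' : (Fin n → ℝ) × 𝔤),
      classifyingBracket 𝔤 R a (r • b + s • b')
        = r • classifyingBracket 𝔤 R a b + s • classifyingBracket 𝔤 R a b') ∧
    (∀ a b, classifyingBracket 𝔤 R a b = - classifyingBracket 𝔤 R b a) ∧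
    ((∀ a b c,
        classifyingBracket 𝔤 R (classifyingBracket 𝔤 R a b) c
          + classifyingBracket 𝔤 R (classifyingBracket 𝔤 R b c) a
          + classifyingBracket 𝔤 R (classifyingBracket 𝔤 R c a) b = 0) ↔
      ((∀ u v w : Fin n → ℝ,
          (R u v : Matrix (Fin n) (Fin n) ℝ) *ᵥ w
            + (R v w : Matrix (Fin n) (Fin n) ℝ) *ᵥ u
            + (R w u : Matrix (Fin n) (Fin n) ℝ) *ᵥ v = 0) ∧
        (∀ (α : 𝔤) (u v : Fin n → ℝ),
          R ((α : Matrix (Fin n) (Fin n) ℝ) *ᵥ u) v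
            + R u ((α : Matrix (Fin n) (Fin n) ℝ) *ᵥ v) = ⁅α, R u v⁆))) := by
  refine ⟨?_, ?_, ?_, ?_⟩
  · intro r s a a' b
    refine Prod.ext ?_ ?_ <;>
      simp only [classifyingBracket, Prod.smul_def, Prod.fst_add, Prod.snd_add, Prod.smul_fst,
        Prod.smul_snd, Prod.mk_add_mk, gcoe_add, gcoe_smul]
    · simp only [Matrix.add_mulVec, Matrix.smul_mulVec, Matrix.mulVec_add,
        Matrix.mulVec_smul]
      module
    · simp only [add_lie, smul_lie, map_add, LinearMap.map_smul, LinearMap.add_apply,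
        LinearMap.smul_apply]
      module
  · intro r s a b b'
    refine Prod.ext ?_ ?_ <;>
      simp only [classifyingBracket, Prod.smul_def, Prod.fst_add, Prod.snd_add, Prod.smul_fst,
        Prod.smul_snd, Prod.mk_add_mk, gcoe_add, gcoe_smul]
    · simp only [Matrix.add_mulVec, Matrix.smul_mulVec, Matrix.mulVec_add,
        Matrix.mulVec_smul]
      module
    · simp only [lie_add, lie_smul, map_add, LinearMap.map_smul, LinearMap.add_apply,
        LinearMap.smul_apply]
      module
  · intro a b
    refine Prod.ext ?_ ?_ <;>
      simp only [classifyingBracket, Prod.fst_neg, Prod.snd_neg]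
    · abel
    · rw [hR a.1 b.1, ← lie_skew a.2 b.2]; abel
  constructor
  · intro h
    constructor
    · intro u v w
      have hh := congrArg Prod.fst (h (u, 0) (v, 0) (w, 0))
      simp only [classifyingBracket, Prod.fst_add, Prod.fst_zero, gcoe_sub, gcoe_neg, gcoe_zero,
        zero_lie, lie_zero, Matrix.zero_mulVec, Matrix.mulVec_zero, sub_zero, zero_sub,
        Matrix.neg_mulVec, neg_add_rev, sub_self] at hh
      linear_combination (norm := module) -hh
    · intro α u v
      have hh := congrArg Prod.snd (h (0, α) (u, 0) (v, 0))
      simp only [classifyingBracket, Prod.snd_add, Prod.snd_zero, gcoe_neg, gcoe_zero,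
        zero_lie, lie_zero, Matrix.zero_mulVec, Matrix.mulVec_zero, sub_zero, zero_sub,
        map_zero, LinearMap.zero_apply, map_neg, LinearMap.neg_apply, neg_lie, sub_self,
        zero_add, add_zero] at hh
      rw [hR u ((α : Matrix (Fin n) (Fin n) ℝ) *ᵥ v), ← lie_skew]
      linear_combination (norm := module) -hh
  · rintro ⟨hB, hE⟩ ⟨u, α⟩ ⟨v, β⟩ ⟨w, γ⟩
    refine Prod.ext ?_ ?_
    · simp only [classifyingBracket, Prod.fst_add, Prod.fst_zero, gcoe_sub,
        LieSubalgebra.coe_bracket, Ring.lie_def, Matrix.sub_mulVec, Matrix.mulVec_sub,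
        Matrix.mulVec_mulVec]
      have hb := hB u v w
      linear_combination (norm := module) -hb
    · simp only [classifyingBracket, Prod.snd_add, Prod.snd_zero, sub_lie, map_sub,
        LinearMap.sub_apply]
      have h1 : ⁅R u v, γ⁆ = R ((γ : Matrix (Fin n) (Fin n) ℝ) *ᵥ v) u
          - R ((γ : Matrix (Fin n) (Fin n) ℝ) *ᵥ u) v := by
        rw [← lie_skew, ← hE γ u v, hR u ((γ : Matrix (Fin n) (Fin n) ℝ) *ᵥ v)]; abel
      have h2 : ⁅R v w, α⁆ = R ((α : Matrix (Fin n) (Fin n) ℝ) *ᵥ w) v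
          - R ((α : Matrix (Fin n) (Fin n) ℝ) *ᵥ v) w := by
        rw [← lie_skew, ← hE α v w, hR v ((α : Matrix (Fin n) (Fin n) ℝ) *ᵥ w)]; abel
      have h3 : ⁅R w u, β⁆ = R ((β : Matrix (Fin n) (Fin n) ℝ) *ᵥ u) w
          - R ((β : Matrix (Fin n) (Fin n) ℝ) *ᵥ w) u := by
        rw [← lie_skew, ← hE β w u, hR w ((β : Matrix (Fin n) (Fin n) ℝ) *ᵥ u)]; abel
      rw [h1, h2, h3]
      rw [show ⁅⁅α, β⁆, γ⁆ = -⁅γ, ⁅α, β⁆⁆ by rw [← lie_skew],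
        show ⁅⁅β, γ⁆, α⁆ = -⁅α, ⁅β, γ⁆⁆ by rw [← lie_skew],
        show ⁅⁅γ, α⁆, β⁆ = -⁅β, ⁅γ, α⁆⁆ by rw [← lie_skew],
        eq_neg_of_add_eq_zero_right (lie_jacobi α β γ)]
      abel
end

section
/- Consequently, the bracket on ℝⁿ ⊕ 𝔰𝔬(n) given by [(u,α),(v,β)] = (α·v − β·u, [α,β] − R(u,v)), with R(u,v)(w) = κ(⟨w,v⟩u − ⟨w,u⟩v), satisfies the Jacobi identity, so ℝⁿ ⊕ 𝔰𝔬(n) with this bracket is a Lie algebra. -/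
open Matrix

/-- The constant-curvature map `R(u,v)`, as a matrix: `R(u,v) *ᵥ w = κ(⟨w,v⟩u − ⟨w,u⟩v)`. -/
def constCurvMat {n : ℕ} (κ : ℝ) (u v : Fin n → ℝ) : Matrix (Fin n) (Fin n) ℝ :=
  κ • (vecMulVec u v - vecMulVec v u)

/-- The bracket `[(u,α),(v,β)] = (α·v − β·u, [α,β] − R(u,v))` on `ℝⁿ ⊕ 𝔤𝔩ₙ(ℝ)`. -/
def spaceFormBracket {n : ℕ} (κ : ℝ)
    (a b : (Fin n → ℝ) × Matrix (Fin n) (Fin n) ℝ) :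
    (Fin n → ℝ) × Matrix (Fin n) (Fin n) ℝ :=
  (a.2 *ᵥ b.1 - b.2 *ᵥ a.1, ⁅a.2, b.2⁆ - constCurvMat κ a.1 b.1)

section helpers
variable {n : ℕ}

lemma vmv_mulVec (u v w : Fin n → ℝ) : vecMulVec u v *ᵥ w = (v ⬝ᵥ w) • u := by
  ext i
  simp [vecMulVec_apply, mulVec, dotProduct, Finset.mul_sum, mul_comm, mul_assoc, mul_left_comm]

lemma mul_vmv (γ : Matrix (Fin n) (Fin n) ℝ) (u v : Fin n → ℝ) :
    γ * vecMulVec u v = vecMulVec (γ *ᵥ u) v := by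
  ext i j
  simp [vecMulVec_apply, mul_apply, mulVec, dotProduct, Finset.sum_mul, mul_assoc]

lemma vmv_mul (γ : Matrix (Fin n) (Fin n) ℝ) (u v : Fin n → ℝ) :
    vecMulVec u v * γ = vecMulVec u (v ᵥ* γ) := by
  ext i j
  simp [vecMulVec_apply, mul_apply, vecMul, dotProduct, Finset.mul_sum, mul_assoc]

lemma vmv_sub_left (x y v : Fin n → ℝ) :
    vecMulVec (x - y) v = vecMulVec x v - vecMulVec y v := by
  ext i j; simp [vecMulVec_apply, sub_mul]

lemma vmv_sub_right (v x y : Fin n → ℝ) :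
    vecMulVec v (x - y) = vecMulVec v x - vecMulVec v y := by
  ext i j; simp [vecMulVec_apply, mul_sub]

lemma vmv_neg_left (x v : Fin n → ℝ) : vecMulVec (-x) v = -vecMulVec x v := by
  ext i j; simp [vecMulVec_apply]

lemma vmv_neg_right (v x : Fin n → ℝ) : vecMulVec v (-x) = -vecMulVec v x := by
  ext i j; simp [vecMulVec_apply]

lemma vmv_transpose (u v : Fin n → ℝ) : (vecMulVec u v)ᵀ = vecMulVec v u := by
  ext i j; simp [vecMulVec_apply, mul_comm]

lemma skew_vecMul (γ : Matrix (Fin n) (Fin n) ℝ) (h : γᵀ = -γ) (v : Fin n → ℝ) :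
    v ᵥ* γ = -(γ *ᵥ v) := by
  have : v ᵥ* γ = v ᵥ* (-(γᵀ)) := by rw [h, neg_neg]
  rw [this, Matrix.vecMul_neg, Matrix.vecMul_transpose]

end helpers

/-- On pairs whose second component is skew-symmetric (i.e. on `ℝⁿ ⊕ 𝔰𝔬(n)`), the bracket
`[(u,α),(v,β)] = (α·v − β·u, [α,β] − R(u,v))` with `R(u,v)(w) = κ(⟨w,v⟩u − ⟨w,u⟩v)` is
closed (its `𝔤`-component is again skew-symmetric) and satisfies the Jacobi identity,
so `ℝⁿ ⊕ 𝔰𝔬(n)` is a Lie algebra. -/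
theorem stmt4 {n : ℕ} (κ : ℝ) :
    (∀ a b : (Fin n → ℝ) × Matrix (Fin n) (Fin n) ℝ, a.2ᵀ = -a.2 → b.2ᵀ = -b.2 →
      ((spaceFormBracket κ a b).2)ᵀ = -(spaceFormBracket κ a b).2) ∧
    (∀ a b c : (Fin n → ℝ) × Matrix (Fin n) (Fin n) ℝ,
      a.2ᵀ = -a.2 → b.2ᵀ = -b.2 → c.2ᵀ = -c.2 →
      spaceFormBracket κ (spaceFormBracket κ a b) c
        + spaceFormBracket κ (spaceFormBracket κ b c) a
        + spaceFormBracket κ (spaceFormBracket κ c a) b = 0) := by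
  constructor
  · intro a b ha hb
    simp only [spaceFormBracket, constCurvMat, Ring.lie_def, transpose_sub, transpose_smul,
      transpose_mul, vmv_transpose, ha, hb, smul_sub, neg_mul, mul_neg, neg_neg, neg_sub]
    module
  · intro a b c ha hb hc
    refine Prod.ext ?_ ?_
    · simp only [spaceFormBracket, constCurvMat, Prod.fst_add, Prod.fst_zero, Ring.lie_def,
        Matrix.sub_mulVec, Matrix.mulVec_sub, Matrix.smul_mulVec, vmv_mulVec,
        ← Matrix.mulVec_mulVec]
      rw [dotProduct_comm c.1 a.1, dotProduct_comm a.1 b.1, dotProduct_comm c.1 b.1]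
      module
    · simp only [spaceFormBracket, constCurvMat, Prod.snd_add, Prod.snd_zero, Ring.lie_def,
        sub_mul, mul_sub, smul_mul_assoc, mul_smul_comm, mul_vmv, vmv_mul,
        skew_vecMul _ ha, skew_vecMul _ hb, skew_vecMul _ hc,
        vmv_sub_left, vmv_sub_right, vmv_neg_left, vmv_neg_right, mul_assoc]
      module
end
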